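/- Continuity of value functions, optimal solutions, and Lagrange multipliers in the LP data (Lemma A.2, LP-data form). Let Θ ⊆ ℝ^d be nonempty, convex and compact, and let p be LP data that is ε-κ-regular for some ε > 0 and κ > 0. For LP data p' in the ε-ball around p, let θ*(p') and θ̄*(p') denote the unique optimal solutions of the minimization and maximization problems, and let (μ*(p'), λ*(p')) and (μ̄*(p'), λ̄*(p')) denote the corresponding unique KKT multipliers. Then for every sequence of LP data pₙ with ‖pₙ − p‖ → 0: (a) θ*(pₙ) → θ*(p) and θ̄*(pₙ) → θ̄*(p); (b) (μ*(pₙ), λ*(pₙ)) → (μ*(p), λ*(p)) and (μ̄*(pₙ), λ̄*(pₙ)) → (μ̄*(p), λ̄*(p)); and (c) V(pₙ) → V(p) and V̄(pₙ) → V̄(p). -/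
import Mathlib


open Filter Topology

/-- Linear-program data `p = (E, f, A, b, c)`: an `r₁ × d` matrix `E`, a vector `f ∈ ℝ^{r₁}`,
an `r₂ × d` matrix `A`, a vector `b ∈ ℝ^{r₂}`, and an objective vector `c ∈ ℝ^d`.
The data space carries the product/sup norm. -/
abbrev LPData (d r₁ r₂ : ℕ) : Type :=
  (Fin r₁ → Fin d → ℝ) × (Fin r₁ → ℝ) × (Fin r₂ → Fin d → ℝ) × (Fin r₂ → ℝ) × (Fin d → ℝ)

variable {d r₁ r₂ : ℕ}

def lpE (p : LPData d r₁ r₂) : Fin r₁ → Fin d → ℝ := p.1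
def lpf (p : LPData d r₁ r₂) : Fin r₁ → ℝ := p.2.1
def lpA (p : LPData d r₁ r₂) : Fin r₂ → Fin d → ℝ := p.2.2.1
def lpb (p : LPData d r₁ r₂) : Fin r₂ → ℝ := p.2.2.2.1
def lpc (p : LPData d r₁ r₂) : Fin d → ℝ := p.2.2.2.2

/-- Euclidean dot product on `ℝ^n`. -/
def dotp {n : ℕ} (x y : Fin n → ℝ) : ℝ := ∑ i, x i * y i

/-- The feasible set `Θ_I(p) = {θ ∈ Θ : Eθ = f, Aθ ≤ b}`. -/
def feasSet (Θ : Set (Fin d → ℝ)) (p : LPData d r₁ r₂) : Set (Fin d → ℝ) :=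
  {θ | θ ∈ Θ ∧ (∀ i, dotp (lpE p i) θ = lpf p i) ∧ ∀ j, dotp (lpA p j) θ ≤ lpb p j}

/-- Lower value function `V(p) = inf {c·θ : θ ∈ Θ_I(p)}`. -/
noncomputable def lowVal (Θ : Set (Fin d → ℝ)) (p : LPData d r₁ r₂) : ℝ :=
  sInf ((fun θ => dotp (lpc p) θ) '' feasSet Θ p)

/-- Upper value function `V̄(p) = sup {c·θ : θ ∈ Θ_I(p)}`. -/
noncomputable def upVal (Θ : Set (Fin d → ℝ)) (p : LPData d r₁ r₂) : ℝ :=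
  sSup ((fun θ => dotp (lpc p) θ) '' feasSet Θ p)

/-- `θs` is an optimal solution of the minimization problem at `p`. -/
def IsOptMin (Θ : Set (Fin d → ℝ)) (p : LPData d r₁ r₂) (θs : Fin d → ℝ) : Prop :=
  θs ∈ feasSet Θ p ∧ ∀ θ ∈ feasSet Θ p, dotp (lpc p) θs ≤ dotp (lpc p) θ

/-- `θs` is an optimal solution of the maximization problem at `p`. -/
def IsOptMax (Θ : Set (Fin d → ℝ)) (p : LPData d r₁ r₂) (θs : Fin d → ℝ) : Prop :=
  θs ∈ feasSet Θ p ∧ ∀ θ ∈ feasSet Θ p, dotp (lpc p) θ ≤ dotp (lpc p) θs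

/-- LICQ at the feasible point `θs` with constant `κ > 0`: the matrix `G` obtained by stacking
the rows of `E` and the active rows of `A` satisfies `min eig (GGᵀ) ≥ κ`, expressed via the
quadratic form: `‖Gᵀv‖² ≥ κ‖v‖²` for every vector `v = (μ, λ)` with `λ` supported on the
active inequality constraints. -/
def LICQ (p : LPData d r₁ r₂) (θs : Fin d → ℝ) (κ : ℝ) : Prop :=
  ∀ (μ : Fin r₁ → ℝ) (lam : Fin r₂ → ℝ),
    (∀ j, dotp (lpA p j) θs ≠ lpb p j → lam j = 0) →
    κ * ((∑ i, μ i ^ 2) + ∑ j, lam j ^ 2) ≤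
      ∑ x, ((∑ i, μ i * lpE p i x) + ∑ j, lam j * lpA p j x) ^ 2

/-- KKT point for the minimization problem at `p`. -/
def IsKKTMin (Θ : Set (Fin d → ℝ)) (p : LPData d r₁ r₂)
    (θs : Fin d → ℝ) (μ : Fin r₁ → ℝ) (lam : Fin r₂ → ℝ) : Prop :=
  θs ∈ feasSet Θ p ∧ θs ∈ interior Θ ∧ (∀ j, 0 ≤ lam j) ∧
    (∀ j, lam j * (dotp (lpA p j) θs - lpb p j) = 0) ∧
    ∀ x, lpc p x + (∑ i, μ i * lpE p i x) + (∑ j, lam j * lpA p j x) = 0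

/-- KKT point for the maximization problem at `p` (stationarity `−c + Eᵀμ + Aᵀλ = 0`). -/
def IsKKTMax (Θ : Set (Fin d → ℝ)) (p : LPData d r₁ r₂)
    (θs : Fin d → ℝ) (μ : Fin r₁ → ℝ) (lam : Fin r₂ → ℝ) : Prop :=
  θs ∈ feasSet Θ p ∧ θs ∈ interior Θ ∧ (∀ j, 0 ≤ lam j) ∧
    (∀ j, lam j * (dotp (lpA p j) θs - lpb p j) = 0) ∧
    ∀ x, -lpc p x + (∑ i, μ i * lpE p i x) + (∑ j, lam j * lpA p j x) = 0

/-- `p` is `ε`-`κ`-regular: for every LP data `p'` in the `ε`-ball around `p`, the feasible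
set is nonempty and both the minimization and maximization problems have unique optimal
solutions lying in the interior of `Θ` at which LICQ holds with constant `κ`. -/
def Regular (Θ : Set (Fin d → ℝ)) (p : LPData d r₁ r₂) (ε κ : ℝ) : Prop :=
  ∀ p' : LPData d r₁ r₂, ‖p' - p‖ ≤ ε →
    (feasSet Θ p').Nonempty ∧
    (∃ θm, IsOptMin Θ p' θm ∧ (∀ θ, IsOptMin Θ p' θ → θ = θm) ∧
      θm ∈ interior Θ ∧ LICQ p' θm κ) ∧
    (∃ θM, IsOptMax Θ p' θM ∧ (∀ θ, IsOptMax Θ p' θ → θ = θM) ∧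
      θM ∈ interior Θ ∧ LICQ p' θM κ)

set_option synthInstance.maxHeartbeats 1000000
set_option maxHeartbeats 2000000

section LemmaA2Helpers

variable {d r₁ r₂ : ℕ}

lemma dotp_sub' {n : ℕ} (c θ θs : Fin n → ℝ) :
    dotp c θ - dotp c θs = ∑ x, c x * (θ x - θs x) := by
  simp [dotp, mul_sub, Finset.sum_sub_distrib]

lemma kkt_min_opt {Θ : Set (Fin d → ℝ)} {p : LPData d r₁ r₂} {θs : Fin d → ℝ}
    {μ : Fin r₁ → ℝ} {lam : Fin r₂ → ℝ}
    (hfeas : θs ∈ feasSet Θ p) (hlam : ∀ j, 0 ≤ lam j)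
    (hcs : ∀ j, lam j * (dotp (lpA p j) θs - lpb p j) = 0)
    (hstat : ∀ x, lpc p x + (∑ i, μ i * lpE p i x) + (∑ j, lam j * lpA p j x) = 0) :
    IsOptMin Θ p θs := by
  refine ⟨hfeas, fun θ hθ => ?_⟩
  have hsum1 : ∀ (m : ℕ) (v : Fin m → ℝ) (B : Fin m → Fin d → ℝ),
      ∑ x, (∑ i, v i * B i x) * (θ x - θs x)
        = ∑ i, v i * (dotp (B i) θ - dotp (B i) θs) := by
    intro m v B
    calc ∑ x, (∑ i, v i * B i x) * (θ x - θs x)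
        = ∑ x, ∑ i, v i * (B i x * (θ x - θs x)) := by
          simp [Finset.sum_mul, mul_assoc]
      _ = ∑ i, ∑ x, v i * (B i x * (θ x - θs x)) := Finset.sum_comm
      _ = ∑ i, v i * ∑ x, B i x * (θ x - θs x) := by simp [Finset.mul_sum]
      _ = ∑ i, v i * (dotp (B i) θ - dotp (B i) θs) := by simp [dotp_sub']
  have h1 : dotp (lpc p) θ - dotp (lpc p) θs
      = -((∑ i, μ i * (dotp (lpE p i) θ - dotp (lpE p i) θs))
          + ∑ j, lam j * (dotp (lpA p j) θ - dotp (lpA p j) θs)) := by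
    rw [dotp_sub', ← hsum1 r₁ μ (lpE p), ← hsum1 r₂ lam (lpA p),
      ← Finset.sum_add_distrib, ← Finset.sum_neg_distrib]
    refine Finset.sum_congr rfl fun x _ => ?_
    linear_combination (θ x - θs x) * hstat x
  have hE0 : (∑ i, μ i * (dotp (lpE p i) θ - dotp (lpE p i) θs)) = 0 := by
    refine Finset.sum_eq_zero fun i _ => ?_
    rw [hθ.2.1 i, hfeas.2.1 i]; ring
  have hA0 : (∑ j, lam j * (dotp (lpA p j) θ - dotp (lpA p j) θs)) ≤ 0 := by
    refine Finset.sum_nonpos fun j _ => ?_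
    have e1 : lam j * dotp (lpA p j) θs = lam j * lpb p j := by
      linear_combination hcs j
    have e2 : lam j * dotp (lpA p j) θ ≤ lam j * lpb p j :=
      mul_le_mul_of_nonneg_left (hθ.2.2 j) (hlam j)
    nlinarith
  linarith [h1, hE0, hA0]

lemma kkt_mult_unique {p : LPData d r₁ r₂} {θs : Fin d → ℝ} {κ : ℝ} (hκ : 0 < κ)
    (hlicq : LICQ p θs κ)
    {μ₁ μ₂ : Fin r₁ → ℝ} {l₁ l₂ : Fin r₂ → ℝ}
    (hcs₁ : ∀ j, l₁ j * (dotp (lpA p j) θs - lpb p j) = 0)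
    (hcs₂ : ∀ j, l₂ j * (dotp (lpA p j) θs - lpb p j) = 0)
    (hstat : ∀ x, (∑ i, μ₁ i * lpE p i x) + (∑ j, l₁ j * lpA p j x)
      = (∑ i, μ₂ i * lpE p i x) + (∑ j, l₂ j * lpA p j x)) :
    μ₁ = μ₂ ∧ l₁ = l₂ := by
  have hsupp : ∀ j, dotp (lpA p j) θs ≠ lpb p j → (l₁ - l₂) j = 0 := by
    intro j hj
    have h1 : l₁ j = 0 := by
      rcases mul_eq_zero.mp (hcs₁ j) with h | h
      · exact h
      · exact absurd (sub_eq_zero.mp h) hj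
    have h2 : l₂ j = 0 := by
      rcases mul_eq_zero.mp (hcs₂ j) with h | h
      · exact h
      · exact absurd (sub_eq_zero.mp h) hj
    simp [h1, h2]
  have hb := hlicq (μ₁ - μ₂) (l₁ - l₂) hsupp
  have hz : ∀ x, (∑ i, (μ₁ - μ₂) i * lpE p i x) + (∑ j, (l₁ - l₂) j * lpA p j x) = 0 := by
    intro x
    have h1 : ∑ i, (μ₁ - μ₂) i * lpE p i x
        = (∑ i, μ₁ i * lpE p i x) - ∑ i, μ₂ i * lpE p i x := by
      simp [sub_mul, Finset.sum_sub_distrib]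
    have h2 : ∑ j, (l₁ - l₂) j * lpA p j x
        = (∑ j, l₁ j * lpA p j x) - ∑ j, l₂ j * lpA p j x := by
      simp [sub_mul, Finset.sum_sub_distrib]
    rw [h1, h2]; linarith [hstat x]
  rw [show (∑ x, ((∑ i, (μ₁ - μ₂) i * lpE p i x) + ∑ j, (l₁ - l₂) j * lpA p j x) ^ 2) = 0
    from Finset.sum_eq_zero fun x _ => by rw [hz x]; ring] at hb
  have hμnn : (0:ℝ) ≤ ∑ i, (μ₁ - μ₂) i ^ 2 := by positivity
  have hlnn : (0:ℝ) ≤ ∑ j, (l₁ - l₂) j ^ 2 := by positivity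
  have hμ0 : ∑ i, (μ₁ - μ₂) i ^ 2 = 0 := by nlinarith
  have hl0 : ∑ j, (l₁ - l₂) j ^ 2 = 0 := by nlinarith
  constructor
  · funext i
    have h3 := (Finset.sum_eq_zero_iff_of_nonneg (fun i _ => sq_nonneg _)).mp hμ0 i
      (Finset.mem_univ i)
    have h4 : μ₁ i - μ₂ i = 0 := by
      have := pow_eq_zero_iff (n := 2) (by norm_num) |>.mp h3
      simpa using this
    linarith
  · funext j
    have h3 := (Finset.sum_eq_zero_iff_of_nonneg (fun j _ => sq_nonneg _)).mp hl0 j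
      (Finset.mem_univ j)
    have h4 : l₁ j - l₂ j = 0 := by
      have := pow_eq_zero_iff (n := 2) (by norm_num) |>.mp h3
      simpa using this
    linarith

end LemmaA2Helpers
section LemmaA2Helpers2

variable {d r₁ r₂ : ℕ}

def negc (p : LPData d r₁ r₂) : LPData d r₁ r₂ :=
  (p.1, p.2.1, p.2.2.1, p.2.2.2.1, -p.2.2.2.2)

@[simp] lemma lpE_negc (p : LPData d r₁ r₂) : lpE (negc p) = lpE p := rfl
@[simp] lemma lpf_negc (p : LPData d r₁ r₂) : lpf (negc p) = lpf p := rfl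
@[simp] lemma lpA_negc (p : LPData d r₁ r₂) : lpA (negc p) = lpA p := rfl
@[simp] lemma lpb_negc (p : LPData d r₁ r₂) : lpb (negc p) = lpb p := rfl

@[simp] lemma negc_negc (p : LPData d r₁ r₂) : negc (negc p) = p := by
  obtain ⟨E, f, A, b, c⟩ := p
  show (E, f, A, b, - -c) = (E, f, A, b, c)
  rw [neg_neg]

lemma norm_negc_sub (q q' : LPData d r₁ r₂) : ‖negc q - negc q'‖ = ‖q - q'‖ := by
  simp only [negc, Prod.norm_def, Prod.fst_sub, Prod.snd_sub, norm_neg]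
  rw [show ‖-q.2.2.2.2 - -q'.2.2.2.2‖ = ‖q.2.2.2.2 - q'.2.2.2.2‖ by
    rw [neg_sub_neg, norm_sub_rev]]

lemma feasSet_negc (Θ : Set (Fin d → ℝ)) (p : LPData d r₁ r₂) :
    feasSet Θ (negc p) = feasSet Θ p := rfl

lemma dotp_neg {n : ℕ} (c θ : Fin n → ℝ) : dotp (-c) θ = -dotp c θ := by
  simp [dotp]

lemma isOptMin_negc (Θ : Set (Fin d → ℝ)) (p : LPData d r₁ r₂) (θ : Fin d → ℝ) :
    IsOptMin Θ (negc p) θ ↔ IsOptMax Θ p θ := by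
  have hc : lpc (negc p) = -lpc p := rfl
  unfold IsOptMin IsOptMax
  rw [feasSet_negc, hc]
  simp [dotp_neg]

lemma isKKTMin_negc (Θ : Set (Fin d → ℝ)) (p : LPData d r₁ r₂) (θ : Fin d → ℝ)
    (μ : Fin r₁ → ℝ) (lam : Fin r₂ → ℝ) :
    IsKKTMin Θ (negc p) θ μ lam ↔ IsKKTMax Θ p θ μ lam := by
  have hc : lpc (negc p) = -lpc p := rfl
  unfold IsKKTMin IsKKTMax
  rw [feasSet_negc, hc]
  simp [lpE_negc, lpA_negc, lpb_negc]

lemma licq_negc (p : LPData d r₁ r₂) (θ : Fin d → ℝ) (κ : ℝ) :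
    LICQ (negc p) θ κ ↔ LICQ p θ κ := Iff.rfl

lemma norm_lpc_sub_le (q q' : LPData d r₁ r₂) : ‖lpc q - lpc q'‖ ≤ ‖q - q'‖ := by
  calc ‖lpc q - lpc q'‖ = ‖(q - q').2.2.2.2‖ := rfl
    _ ≤ ‖(q - q').2.2.2‖ := norm_snd_le _
    _ ≤ ‖(q - q').2.2‖ := norm_snd_le _
    _ ≤ ‖(q - q').2‖ := norm_snd_le _
    _ ≤ ‖q - q'‖ := norm_snd_le _

lemma continuous_negc : Continuous (negc : LPData d r₁ r₂ → LPData d r₁ r₂) := by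
  unfold negc; fun_prop

lemma continuous_lpE : Continuous (lpE : LPData d r₁ r₂ → _) := by unfold lpE; fun_prop
lemma continuous_lpf : Continuous (lpf : LPData d r₁ r₂ → _) := by unfold lpf; fun_prop
lemma continuous_lpA : Continuous (lpA : LPData d r₁ r₂ → _) := by unfold lpA; fun_prop
lemma continuous_lpb : Continuous (lpb : LPData d r₁ r₂ → _) := by unfold lpb; fun_prop
lemma continuous_lpc : Continuous (lpc : LPData d r₁ r₂ → _) := by unfold lpc; fun_prop

lemma tendsto_dotp {n : ℕ} {α : Type*} {l : Filter α} {f g : α → Fin n → ℝ}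
    {a b : Fin n → ℝ} (hf : Tendsto f l (𝓝 a)) (hg : Tendsto g l (𝓝 b)) :
    Tendsto (fun k => dotp (f k) (g k)) l (𝓝 (dotp a b)) := by
  unfold dotp
  exact tendsto_finset_sum _ fun i _ =>
    (tendsto_pi_nhds.mp hf i).mul (tendsto_pi_nhds.mp hg i)

end LemmaA2Helpers2
section LemmaA2Key

variable {d r₁ r₂ : ℕ}

lemma key_min (Θ : Set (Fin d → ℝ)) (hΘcomp : IsCompact Θ)
    (p : LPData d r₁ r₂) (ε κ : ℝ) (hκ : 0 < κ)
    (S : LPData d r₁ r₂ → Fin d → ℝ) (M : LPData d r₁ r₂ → Fin r₁ → ℝ)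
    (L : LPData d r₁ r₂ → Fin r₂ → ℝ)
    (h : ∀ p', ‖p' - p‖ ≤ ε → IsOptMin Θ p' (S p') ∧ (∀ θ, IsOptMin Θ p' θ → θ = S p') ∧
        IsKKTMin Θ p' (S p') (M p') (L p') ∧ LICQ p' (S p') κ)
    (qn : ℕ → LPData d r₁ r₂) (hq : ∀ n, ‖qn n - p‖ ≤ ε)
    (hq2 : Tendsto qn atTop (𝓝 p)) :
    Tendsto (fun n => (S (qn n), M (qn n), L (qn n))) atTop (𝓝 (S p, M p, L p)) := by
  have hε0 : 0 ≤ ε := le_trans (norm_nonneg _) (hq 0)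
  have hp0 : ‖p - p‖ ≤ ε := by simpa using hε0
  set C : ℝ := Real.sqrt ((d : ℝ) * (‖lpc p‖ + ε) ^ 2 / κ) with hCdef
  have hC0 : 0 ≤ C := Real.sqrt_nonneg _
  have hCsq : C ^ 2 = (d : ℝ) * (‖lpc p‖ + ε) ^ 2 / κ := by
    rw [hCdef]
    exact Real.sq_sqrt (div_nonneg (by positivity) hκ.le)
  -- uniform bound on multipliers
  have hbound : ∀ q : LPData d r₁ r₂, ‖q - p‖ ≤ ε → ‖M q‖ ≤ C ∧ ‖L q‖ ≤ C := by
    intro q hq'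
    obtain ⟨-, -, hkkt, hlicq⟩ := h q hq'
    obtain ⟨hfeas, -, hlam, hcs, hstat⟩ := hkkt
    have hsupp : ∀ j, dotp (lpA q j) (S q) ≠ lpb q j → L q j = 0 := by
      intro j hj
      rcases mul_eq_zero.mp (hcs j) with h' | h'
      · exact h'
      · exact absurd (sub_eq_zero.mp h') hj
    have hb := hlicq (M q) (L q) hsupp
    have hcq : ‖lpc q‖ ≤ ‖lpc p‖ + ε := by
      have h1 : ‖lpc q - lpc p‖ ≤ ‖q - p‖ := norm_lpc_sub_le q p
      have h2 := norm_sub_norm_le (lpc q) (lpc p)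
      linarith
    have hRHS : (∑ x, ((∑ i, M q i * lpE q i x) + ∑ j, L q j * lpA q j x) ^ 2)
        ≤ (d : ℝ) * (‖lpc p‖ + ε) ^ 2 := by
      have heach : ∀ x, ((∑ i, M q i * lpE q i x) + ∑ j, L q j * lpA q j x) ^ 2
          ≤ (‖lpc p‖ + ε) ^ 2 := by
        intro x
        have hx : ((∑ i, M q i * lpE q i x) + ∑ j, L q j * lpA q j x) = - lpc q x := by
          linarith [hstat x]
        rw [hx]
        have h1 : |lpc q x| ≤ ‖lpc q‖ := by
          simpa using norm_le_pi_norm (lpc q) x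
        have h2 : |lpc q x| ≤ ‖lpc p‖ + ε := le_trans h1 hcq
        nlinarith [abs_nonneg (lpc q x), sq_abs (lpc q x)]
      calc (∑ x, ((∑ i, M q i * lpE q i x) + ∑ j, L q j * lpA q j x) ^ 2)
          ≤ ∑ _x : Fin d, (‖lpc p‖ + ε) ^ 2 := Finset.sum_le_sum fun x _ => heach x
        _ = (d : ℝ) * (‖lpc p‖ + ε) ^ 2 := by
            simp [Finset.sum_const, Finset.card_univ, nsmul_eq_mul]
    have hsq : (∑ i, M q i ^ 2) + ∑ j, L q j ^ 2 ≤ C ^ 2 := by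
      rw [hCsq, le_div_iff₀ hκ]
      nlinarith [hb, hRHS]
    have hMnn : (0:ℝ) ≤ ∑ i, M q i ^ 2 := by positivity
    have hLnn : (0:ℝ) ≤ ∑ j, L q j ^ 2 := by positivity
    constructor
    · refine (pi_norm_le_iff_of_nonneg hC0).mpr fun i => ?_
      have h2 : M q i ^ 2 ≤ ∑ i', M q i' ^ 2 :=
        Finset.single_le_sum (fun i' _ => sq_nonneg (M q i')) (Finset.mem_univ i)
      rw [Real.norm_eq_abs, ← Real.sqrt_sq_eq_abs]
      calc Real.sqrt (M q i ^ 2) ≤ Real.sqrt (C ^ 2) := Real.sqrt_le_sqrt (by linarith)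
        _ = C := by rw [Real.sqrt_sq hC0]
    · refine (pi_norm_le_iff_of_nonneg hC0).mpr fun j => ?_
      have h2 : L q j ^ 2 ≤ ∑ j', L q j' ^ 2 :=
        Finset.single_le_sum (fun j' _ => sq_nonneg (L q j')) (Finset.mem_univ j)
      rw [Real.norm_eq_abs, ← Real.sqrt_sq_eq_abs]
      calc Real.sqrt (L q j ^ 2) ≤ Real.sqrt (C ^ 2) := Real.sqrt_le_sqrt (by linarith)
        _ = C := by rw [Real.sqrt_sq hC0]
  -- compact region containing the solutions and multipliers
  have hKcomp : IsCompact (Θ ×ˢ (Metric.closedBall (0 : Fin r₁ → ℝ) C ×ˢ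
      Metric.closedBall (0 : Fin r₂ → ℝ) C)) :=
    hΘcomp.prod ((isCompact_closedBall _ _).prod (isCompact_closedBall _ _))
  have hmem : ∀ q : LPData d r₁ r₂, ‖q - p‖ ≤ ε →
      (S q, M q, L q) ∈ Θ ×ˢ (Metric.closedBall (0 : Fin r₁ → ℝ) C ×ˢ
        Metric.closedBall (0 : Fin r₂ → ℝ) C) :=
    fun q hq' => ⟨(h q hq').1.1.1, mem_closedBall_zero_iff.mpr (hbound q hq').1,
      mem_closedBall_zero_iff.mpr (hbound q hq').2⟩
  apply tendsto_of_subseq_tendsto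
  intro ns hns
  obtain ⟨z, hzK, φ, hφ, hφtend⟩ :=
    hKcomp.tendsto_subseq (x := fun k => (S (qn (ns k)), M (qn (ns k)), L (qn (ns k))))
      (fun k => hmem _ (hq _))
  obtain ⟨θh, μh, lamh⟩ := z
  refine ⟨φ, ?_⟩
  have hrtend : Tendsto (fun k => qn (ns (φ k))) atTop (𝓝 p) :=
    hq2.comp (hns.comp hφ.tendsto_atTop)
  have hθt : Tendsto (fun k => S (qn (ns (φ k)))) atTop (𝓝 θh) :=
    (continuous_fst.tendsto _).comp hφtend
  have hμt : Tendsto (fun k => M (qn (ns (φ k)))) atTop (𝓝 μh) :=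
    ((continuous_fst.comp continuous_snd).tendsto _).comp hφtend
  have hlamt : Tendsto (fun k => L (qn (ns (φ k)))) atTop (𝓝 lamh) :=
    ((continuous_snd.comp continuous_snd).tendsto _).comp hφtend
  have hEt : Tendsto (fun k => lpE (qn (ns (φ k)))) atTop (𝓝 (lpE p)) :=
    (continuous_lpE.tendsto p).comp hrtend
  have hft : Tendsto (fun k => lpf (qn (ns (φ k)))) atTop (𝓝 (lpf p)) :=
    (continuous_lpf.tendsto p).comp hrtend
  have hAt : Tendsto (fun k => lpA (qn (ns (φ k)))) atTop (𝓝 (lpA p)) :=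
    (continuous_lpA.tendsto p).comp hrtend
  have hbt : Tendsto (fun k => lpb (qn (ns (φ k)))) atTop (𝓝 (lpb p)) :=
    (continuous_lpb.tendsto p).comp hrtend
  have hct : Tendsto (fun k => lpc (qn (ns (φ k)))) atTop (𝓝 (lpc p)) :=
    (continuous_lpc.tendsto p).comp hrtend
  have hfacts : ∀ k, IsOptMin Θ (qn (ns (φ k))) (S (qn (ns (φ k)))) ∧
      IsKKTMin Θ (qn (ns (φ k))) (S (qn (ns (φ k)))) (M (qn (ns (φ k)))) (L (qn (ns (φ k)))) :=
    fun k => ⟨(h _ (hq _)).1, (h _ (hq _)).2.2.1⟩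
  have hθΘ : θh ∈ Θ := hΘcomp.isClosed.mem_of_tendsto hθt
    (Filter.Eventually.of_forall fun k => (hfacts k).1.1.1)
  have hfeaslim : θh ∈ feasSet Θ p := by
    refine ⟨hθΘ, fun i => ?_, fun j => ?_⟩
    · have h1 : Tendsto (fun k => dotp (lpE (qn (ns (φ k))) i) (S (qn (ns (φ k))))) atTop
          (𝓝 (dotp (lpE p i) θh)) :=
        tendsto_dotp (tendsto_pi_nhds.mp hEt i) hθt
      have h2 : Tendsto (fun k => dotp (lpE (qn (ns (φ k))) i) (S (qn (ns (φ k))))) atTop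
          (𝓝 (lpf p i)) :=
        (tendsto_pi_nhds.mp hft i).congr fun k => ((hfacts k).1.1.2.1 i).symm
      exact tendsto_nhds_unique h1 h2
    · have h1 : Tendsto (fun k => dotp (lpA (qn (ns (φ k))) j) (S (qn (ns (φ k))))) atTop
          (𝓝 (dotp (lpA p j) θh)) :=
        tendsto_dotp (tendsto_pi_nhds.mp hAt j) hθt
      exact le_of_tendsto_of_tendsto' h1 (tendsto_pi_nhds.mp hbt j)
        fun k => (hfacts k).1.1.2.2 j
  have hlamnn : ∀ j, 0 ≤ lamh j := fun j =>
    ge_of_tendsto (tendsto_pi_nhds.mp hlamt j)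
      (Filter.Eventually.of_forall fun k => (hfacts k).2.2.2.1 j)
  have hcslim : ∀ j, lamh j * (dotp (lpA p j) θh - lpb p j) = 0 := by
    intro j
    have h1 : Tendsto (fun k => L (qn (ns (φ k))) j *
        (dotp (lpA (qn (ns (φ k))) j) (S (qn (ns (φ k)))) - lpb (qn (ns (φ k))) j)) atTop
        (𝓝 (lamh j * (dotp (lpA p j) θh - lpb p j))) :=
      (tendsto_pi_nhds.mp hlamt j).mul
        ((tendsto_dotp (tendsto_pi_nhds.mp hAt j) hθt).sub (tendsto_pi_nhds.mp hbt j))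
    exact tendsto_nhds_unique h1
      (tendsto_const_nhds.congr fun k => ((hfacts k).2.2.2.2.1 j).symm)
  have hstatlim : ∀ x, lpc p x + (∑ i, μh i * lpE p i x) + (∑ j, lamh j * lpA p j x) = 0 := by
    intro x
    have h1 : Tendsto (fun k => lpc (qn (ns (φ k))) x
        + (∑ i, M (qn (ns (φ k))) i * lpE (qn (ns (φ k))) i x)
        + ∑ j, L (qn (ns (φ k))) j * lpA (qn (ns (φ k))) j x) atTop
        (𝓝 (lpc p x + (∑ i, μh i * lpE p i x) + ∑ j, lamh j * lpA p j x)) := by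
      refine ((tendsto_pi_nhds.mp hct x).add ?_).add ?_
      · exact tendsto_finset_sum _ fun i _ =>
          (tendsto_pi_nhds.mp hμt i).mul (tendsto_pi_nhds.mp (tendsto_pi_nhds.mp hEt i) x)
      · exact tendsto_finset_sum _ fun j _ =>
          (tendsto_pi_nhds.mp hlamt j).mul (tendsto_pi_nhds.mp (tendsto_pi_nhds.mp hAt j) x)
    exact tendsto_nhds_unique h1
      (tendsto_const_nhds.congr fun k => ((hfacts k).2.2.2.2.2 x).symm)
  have hopt : IsOptMin Θ p θh := kkt_min_opt hfeaslim hlamnn hcslim hstatlim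
  have hθeq : θh = S p := (h p hp0).2.1 θh hopt
  subst hθeq
  obtain ⟨-, -, hkktp, hlicqp⟩ := h p hp0
  have hmult : μh = M p ∧ lamh = L p :=
    kkt_mult_unique hκ hlicqp hcslim hkktp.2.2.2.1
      (fun x => by linarith [hstatlim x, hkktp.2.2.2.2 x])
  obtain ⟨hm1, hm2⟩ := hmult
  subst hm1
  subst hm2
  exact hφtend

end LemmaA2Key

/-- **Lemma A.2 (continuity of value functions, optimal solutions, and Lagrange multipliers
in the LP data).** Let `p` be ε-κ-regular LP data, and let `θmSel, μmSel, lammSel`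
(resp. `θMSel, μMSel, lamMSel`) be selections of the unique optimal solutions and unique KKT
multipliers of the minimization (resp. maximization) problems on the ε-ball around `p`.
Then along any sequence `pₙ` with `‖pₙ − p‖ → 0`:
(a) `θ*(pₙ) → θ*(p)` and `θ̄*(pₙ) → θ̄*(p)`;
(b) the multipliers converge to the multipliers at `p`;
(c) `V(pₙ) → V(p)` and `V̄(pₙ) → V̄(p)`. -/
theorem continuity_of_values_solutions_multipliers
    (hd : 1 ≤ d)
    (Θ : Set (Fin d → ℝ)) (hΘne : Θ.Nonempty) (hΘconv : Convex ℝ Θ) (hΘcomp : IsCompact Θ)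
    (p : LPData d r₁ r₂) (ε κ : ℝ) (hε : 0 < ε) (hκ : 0 < κ)
    (hreg : Regular Θ p ε κ)
    (θmSel θMSel : LPData d r₁ r₂ → Fin d → ℝ)
    (μmSel μMSel : LPData d r₁ r₂ → Fin r₁ → ℝ)
    (lammSel lamMSel : LPData d r₁ r₂ → Fin r₂ → ℝ)
    (hSelMin : ∀ p' : LPData d r₁ r₂, ‖p' - p‖ ≤ ε →
      IsOptMin Θ p' (θmSel p') ∧ (∀ θ, IsOptMin Θ p' θ → θ = θmSel p') ∧
      IsKKTMin Θ p' (θmSel p') (μmSel p') (lammSel p'))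
    (hSelMax : ∀ p' : LPData d r₁ r₂, ‖p' - p‖ ≤ ε →
      IsOptMax Θ p' (θMSel p') ∧ (∀ θ, IsOptMax Θ p' θ → θ = θMSel p') ∧
      IsKKTMax Θ p' (θMSel p') (μMSel p') (lamMSel p'))
    (pn : ℕ → LPData d r₁ r₂)
    (hpn : Tendsto (fun n => ‖pn n - p‖) atTop (𝓝 0)) :
    (Tendsto (fun n => θmSel (pn n)) atTop (𝓝 (θmSel p)) ∧
      Tendsto (fun n => θMSel (pn n)) atTop (𝓝 (θMSel p))) ∧
    (Tendsto (fun n => (μmSel (pn n), lammSel (pn n))) atTop (𝓝 (μmSel p, lammSel p)) ∧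
      Tendsto (fun n => (μMSel (pn n), lamMSel (pn n))) atTop (𝓝 (μMSel p, lamMSel p))) ∧
    (Tendsto (fun n => lowVal Θ (pn n)) atTop (𝓝 (lowVal Θ p)) ∧
      Tendsto (fun n => upVal Θ (pn n)) atTop (𝓝 (upVal Θ p))) := by
  classical
  have hp0 : ‖p - p‖ ≤ ε := by simpa using hε.le
  set qn : ℕ → LPData d r₁ r₂ := fun n => if ‖pn n - p‖ ≤ ε then pn n else p with hqndef
  have hqball : ∀ n, ‖qn n - p‖ ≤ ε := by
    intro n
    by_cases h' : ‖pn n - p‖ ≤ ε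
    · simp [hqndef, h']
    · simp [hqndef, h', hε.le]
  have heq : ∀ᶠ n in atTop, qn n = pn n := by
    have hev : ∀ᶠ n in atTop, ‖pn n - p‖ ≤ ε :=
      hpn.eventually (eventually_le_nhds hε)
    filter_upwards [hev] with n hn
    simp [hqndef, hn]
  have hpnt : Tendsto pn atTop (𝓝 p) := by
    rwa [tendsto_iff_norm_sub_tendsto_zero]
  have hq2 : Tendsto qn atTop (𝓝 p) :=
    Filter.Tendsto.congr' (Filter.EventuallyEq.symm heq) hpnt
  -- min part
  have hmin : ∀ p', ‖p' - p‖ ≤ ε → IsOptMin Θ p' (θmSel p') ∧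
      (∀ θ, IsOptMin Θ p' θ → θ = θmSel p') ∧
      IsKKTMin Θ p' (θmSel p') (μmSel p') (lammSel p') ∧ LICQ p' (θmSel p') κ := by
    intro p' hp'
    obtain ⟨hopt, huniq, hkkt⟩ := hSelMin p' hp'
    obtain ⟨-, ⟨θm, hoptm, huniqm, -, hlicqm⟩, -⟩ := hreg p' hp'
    have hh : θmSel p' = θm := huniqm _ hopt
    exact ⟨hopt, huniq, hkkt, hh ▸ hlicqm⟩
  have hminT := key_min Θ hΘcomp p ε κ hκ θmSel μmSel lammSel hmin qn hqball hq2
  -- max part via negation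
  have hmax : ∀ p', ‖p' - negc p‖ ≤ ε →
      IsOptMin Θ p' (θMSel (negc p')) ∧
      (∀ θ, IsOptMin Θ p' θ → θ = θMSel (negc p')) ∧
      IsKKTMin Θ p' (θMSel (negc p')) (μMSel (negc p')) (lamMSel (negc p')) ∧
      LICQ p' (θMSel (negc p')) κ := by
    intro p' hp'
    have hrw : negc (negc p') = p' := negc_negc p'
    have hq' : ‖negc p' - p‖ ≤ ε := by
      have h1 := norm_negc_sub p' (negc p)
      rw [negc_negc] at h1
      rw [h1]
      exact hp'
    obtain ⟨hopt, huniq, hkkt⟩ := hSelMax (negc p') hq'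
    obtain ⟨-, -, θM, hoptM, huniqM, -, hlicqM⟩ := hreg (negc p') hq'
    have heqM : θMSel (negc p') = θM := huniqM _ hopt
    refine ⟨?_, ?_, ?_, ?_⟩
    · have hx := (isOptMin_negc Θ (negc p') (θMSel (negc p'))).mpr hopt
      rwa [hrw] at hx
    · intro θ hθ
      rw [← hrw] at hθ
      exact huniq θ ((isOptMin_negc Θ (negc p') θ).mp hθ)
    · have hx := (isKKTMin_negc Θ (negc p') (θMSel (negc p'))
        (μMSel (negc p')) (lamMSel (negc p'))).mpr hkkt
      rwa [hrw] at hx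
    · have hx : LICQ (negc p') (θMSel (negc p')) κ := by rw [heqM]; exact hlicqM
      exact (licq_negc p' (θMSel (negc p')) κ).mp hx
  have hqballM : ∀ n, ‖negc (qn n) - negc p‖ ≤ ε := by
    intro n
    rw [norm_negc_sub]
    exact hqball n
  have hq2M : Tendsto (fun n => negc (qn n)) atTop (𝓝 (negc p)) :=
    (continuous_negc.tendsto p).comp hq2
  have hmaxT := key_min Θ hΘcomp (negc p) ε κ hκ
      (fun q => θMSel (negc q)) (fun q => μMSel (negc q)) (fun q => lamMSel (negc q))
      hmax (fun n => negc (qn n)) hqballM hq2M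
  simp only [negc_negc] at hmaxT
  -- components
  have hθm : Tendsto (fun n => θmSel (qn n)) atTop (𝓝 (θmSel p)) :=
    (continuous_fst.tendsto _).comp hminT
  have hμm : Tendsto (fun n => μmSel (qn n)) atTop (𝓝 (μmSel p)) :=
    ((continuous_fst.comp continuous_snd).tendsto _).comp hminT
  have hlm : Tendsto (fun n => lammSel (qn n)) atTop (𝓝 (lammSel p)) :=
    ((continuous_snd.comp continuous_snd).tendsto _).comp hminT
  have hθM : Tendsto (fun n => θMSel (qn n)) atTop (𝓝 (θMSel p)) :=
    (continuous_fst.tendsto _).comp hmaxT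
  have hμM : Tendsto (fun n => μMSel (qn n)) atTop (𝓝 (μMSel p)) :=
    ((continuous_fst.comp continuous_snd).tendsto _).comp hmaxT
  have hlM : Tendsto (fun n => lamMSel (qn n)) atTop (𝓝 (lamMSel p)) :=
    ((continuous_snd.comp continuous_snd).tendsto _).comp hmaxT
  -- values
  have hlowq : ∀ q, ‖q - p‖ ≤ ε → lowVal Θ q = dotp (lpc q) (θmSel q) := by
    intro q hq'
    obtain ⟨⟨hfeas, hle⟩, -, -⟩ := hSelMin q hq'
    refine IsLeast.csInf_eq ⟨⟨_, hfeas, rfl⟩, ?_⟩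
    rintro y ⟨θ, hθ, rfl⟩
    exact hle θ hθ
  have hupq : ∀ q, ‖q - p‖ ≤ ε → upVal Θ q = dotp (lpc q) (θMSel q) := by
    intro q hq'
    obtain ⟨⟨hfeas, hle⟩, -, -⟩ := hSelMax q hq'
    refine IsGreatest.csSup_eq ⟨⟨_, hfeas, rfl⟩, ?_⟩
    rintro y ⟨θ, hθ, rfl⟩
    exact hle θ hθ
  have hcq : Tendsto (fun n => lpc (qn n)) atTop (𝓝 (lpc p)) :=
    (continuous_lpc.tendsto p).comp hq2
  have hlowt : Tendsto (fun n => lowVal Θ (qn n)) atTop (𝓝 (lowVal Θ p)) := by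
    rw [hlowq p hp0]
    exact (tendsto_dotp hcq hθm).congr fun n => (hlowq (qn n) (hqball n)).symm
  have hupt : Tendsto (fun n => upVal Θ (qn n)) atTop (𝓝 (upVal Θ p)) := by
    rw [hupq p hp0]
    exact (tendsto_dotp hcq hθM).congr fun n => (hupq (qn n) (hqball n)).symm
  -- transfer back from `qn` to `pn`
  refine ⟨⟨?_, ?_⟩, ⟨?_, ?_⟩, ?_, ?_⟩
  · exact hθm.congr' (heq.mono fun n hn => congrArg θmSel hn)
  · exact hθM.congr' (heq.mono fun n hn => congrArg θMSel hn)
  · exact (hμm.prodMk_nhds hlm).congr' (heq.mono fun n hn => by rw [hn])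
  · exact (hμM.prodMk_nhds hlM).congr' (heq.mono fun n hn => by rw [hn])
  · exact hlowt.congr' (heq.mono fun n hn => by rw [hn])
  · exact hupt.congr' (heq.mono fun n hn => by rw [hn])
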